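/- The Veronese map ι: S²(√3) → S⁴ is an isometric immersion: the pullback of the Euclidean metric of ℝ⁵ under ι equals the metric induced on S²(√3) from ℝ³. Equivalently, for every point p ∈ S²(√3) and tangent vectors v, w ∈ T_pS²(√3), ⟨dι_p(v), dι_p(w)⟩_{ℝ⁵} = ⟨v,w⟩_{ℝ³}. -/

import Mathlib

open scoped RealInnerProductSpace

noncomputable def veroneseMap (p : EuclideanSpace ℝ (Fin 3)) : EuclideanSpace ℝ (Fin 5) :=
  (WithLp.equiv 2 (Fin 5 → ℝ)).symm
    ![(1 / Real.sqrt 3) * (p 0 * p 1),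
      (1 / Real.sqrt 3) * (p 0 * p 2),
      (1 / Real.sqrt 3) * (p 1 * p 2),
      (1 / Real.sqrt 3) * ((p 0 ^ 2 - p 1 ^ 2) / 2),
      (1 / Real.sqrt 3) * ((p 0 ^ 2 + p 1 ^ 2 - 2 * p 2 ^ 2) / (2 * Real.sqrt 3))]

noncomputable def veroneseDeriv (p : EuclideanSpace ℝ (Fin 3)) :
    EuclideanSpace ℝ (Fin 3) →L[ℝ] EuclideanSpace ℝ (Fin 5) :=
  ((PiLp.continuousLinearEquiv 2 ℝ (fun _ : Fin 5 => ℝ)).symm : (Fin 5 → ℝ) →L[ℝ] EuclideanSpace ℝ (Fin 5)).comp <|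
    ContinuousLinearMap.pi
      ![(1 / Real.sqrt 3) • ((p 0 : ℝ) • (EuclideanSpace.proj 1 : EuclideanSpace ℝ (Fin 3) →L[ℝ] ℝ) + p 1 • EuclideanSpace.proj 0),
        (1 / Real.sqrt 3) • ((p 0 : ℝ) • (EuclideanSpace.proj 2 : EuclideanSpace ℝ (Fin 3) →L[ℝ] ℝ) + p 2 • EuclideanSpace.proj 0),
        (1 / Real.sqrt 3) • ((p 1 : ℝ) • (EuclideanSpace.proj 2 : EuclideanSpace ℝ (Fin 3) →L[ℝ] ℝ) + p 2 • EuclideanSpace.proj 1),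
        (1 / Real.sqrt 3) • ((p 0 : ℝ) • (EuclideanSpace.proj 0 : EuclideanSpace ℝ (Fin 3) →L[ℝ] ℝ) - p 1 • EuclideanSpace.proj 1),
        (1 / (3 : ℝ)) • ((p 0 : ℝ) • (EuclideanSpace.proj 0 : EuclideanSpace ℝ (Fin 3) →L[ℝ] ℝ) + p 1 • EuclideanSpace.proj 1 - (2 * p 2) • EuclideanSpace.proj 2)]

lemma veronese_hasFDerivAt (p : EuclideanSpace ℝ (Fin 3)) :
    HasFDerivAt veroneseMap (veroneseDeriv p) p := by
  have h0 : HasFDerivAt (fun q : EuclideanSpace ℝ (Fin 3) => q 0)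
      (EuclideanSpace.proj (0 : Fin 3) : EuclideanSpace ℝ (Fin 3) →L[ℝ] ℝ) p :=
    (EuclideanSpace.proj (0 : Fin 3) : EuclideanSpace ℝ (Fin 3) →L[ℝ] ℝ).hasFDerivAt
  have h1 : HasFDerivAt (fun q : EuclideanSpace ℝ (Fin 3) => q 1)
      (EuclideanSpace.proj (1 : Fin 3) : EuclideanSpace ℝ (Fin 3) →L[ℝ] ℝ) p :=
    (EuclideanSpace.proj (1 : Fin 3) : EuclideanSpace ℝ (Fin 3) →L[ℝ] ℝ).hasFDerivAt
  have h2 : HasFDerivAt (fun q : EuclideanSpace ℝ (Fin 3) => q 2)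
      (EuclideanSpace.proj (2 : Fin 3) : EuclideanSpace ℝ (Fin 3) →L[ℝ] ℝ) p :=
    (EuclideanSpace.proj (2 : Fin 3) : EuclideanSpace ℝ (Fin 3) →L[ℝ] ℝ).hasFDerivAt
  rw [show veroneseMap = (PiLp.continuousLinearEquiv 2 ℝ (fun _ : Fin 5 => ℝ)).symm ∘
      (fun q : EuclideanSpace ℝ (Fin 3) =>
        (![(1 / Real.sqrt 3) * (q 0 * q 1),
          (1 / Real.sqrt 3) * (q 0 * q 2),
          (1 / Real.sqrt 3) * (q 1 * q 2),
          (1 / Real.sqrt 3) * ((q 0 ^ 2 - q 1 ^ 2) / 2),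
          (1 / Real.sqrt 3) * ((q 0 ^ 2 + q 1 ^ 2 - 2 * q 2 ^ 2) / (2 * Real.sqrt 3))] : Fin 5 → ℝ))
      from rfl, veroneseDeriv]
  rw [ContinuousLinearEquiv.comp_hasFDerivAt_iff]
  apply hasFDerivAt_pi''
  intro i
  have c0 : HasFDerivAt (fun q : EuclideanSpace ℝ (Fin 3) => (1 / Real.sqrt 3) * (q 0 * q 1))
      ((1 / Real.sqrt 3) • ((p 0 : ℝ) • (EuclideanSpace.proj 1 : EuclideanSpace ℝ (Fin 3) →L[ℝ] ℝ)
        + p 1 • EuclideanSpace.proj 0)) p := (h0.mul h1).const_mul _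
  have c1 : HasFDerivAt (fun q : EuclideanSpace ℝ (Fin 3) => (1 / Real.sqrt 3) * (q 0 * q 2))
      ((1 / Real.sqrt 3) • ((p 0 : ℝ) • (EuclideanSpace.proj 2 : EuclideanSpace ℝ (Fin 3) →L[ℝ] ℝ)
        + p 2 • EuclideanSpace.proj 0)) p := (h0.mul h2).const_mul _
  have c2 : HasFDerivAt (fun q : EuclideanSpace ℝ (Fin 3) => (1 / Real.sqrt 3) * (q 1 * q 2))
      ((1 / Real.sqrt 3) • ((p 1 : ℝ) • (EuclideanSpace.proj 2 : EuclideanSpace ℝ (Fin 3) →L[ℝ] ℝ)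
        + p 2 • EuclideanSpace.proj 1)) p := (h1.mul h2).const_mul _
  have c3 : HasFDerivAt (fun q : EuclideanSpace ℝ (Fin 3) => (1 / Real.sqrt 3) * ((q 0 ^ 2 - q 1 ^ 2) / 2))
      ((1 / Real.sqrt 3) • ((p 0 : ℝ) • (EuclideanSpace.proj 0 : EuclideanSpace ℝ (Fin 3) →L[ℝ] ℝ)
        - p 1 • EuclideanSpace.proj 1)) p := by
    have heq : (fun q : EuclideanSpace ℝ (Fin 3) => (1 / Real.sqrt 3) * ((q 0 ^ 2 - q 1 ^ 2) / 2))
        = fun q : EuclideanSpace ℝ (Fin 3) => (1 / Real.sqrt 3 * (1 / 2)) * (q 0 * q 0 - q 1 * q 1) := by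
      funext q; ring
    rw [heq]
    refine (((h0.mul h0).sub (h1.mul h1)).const_mul (1 / Real.sqrt 3 * (1 / 2))).congr_fderiv ?_
    ext u
    simp
    ring
  have c4 : HasFDerivAt (fun q : EuclideanSpace ℝ (Fin 3) =>
        (1 / Real.sqrt 3) * ((q 0 ^ 2 + q 1 ^ 2 - 2 * q 2 ^ 2) / (2 * Real.sqrt 3)))
      ((1 / (3 : ℝ)) • ((p 0 : ℝ) • (EuclideanSpace.proj 0 : EuclideanSpace ℝ (Fin 3) →L[ℝ] ℝ)
        + p 1 • EuclideanSpace.proj 1 - (2 * p 2) • EuclideanSpace.proj 2)) p := by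
    have heq : (fun q : EuclideanSpace ℝ (Fin 3) =>
        (1 / Real.sqrt 3) * ((q 0 ^ 2 + q 1 ^ 2 - 2 * q 2 ^ 2) / (2 * Real.sqrt 3)))
        = fun q : EuclideanSpace ℝ (Fin 3) =>
        (1 / Real.sqrt 3 * (1 / (2 * Real.sqrt 3))) * (q 0 * q 0 + q 1 * q 1 - 2 * (q 2 * q 2)) := by
      funext q; ring
    rw [heq]
    refine ((((h0.mul h0).add (h1.mul h1)).sub ((h2.mul h2).const_mul 2)).const_mul
      (1 / Real.sqrt 3 * (1 / (2 * Real.sqrt 3)))).congr_fderiv ?_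
    ext u
    have hs : Real.sqrt 3 * Real.sqrt 3 = 3 := Real.mul_self_sqrt (by norm_num)
    have hne : Real.sqrt 3 ≠ 0 := by positivity
    simp
    field_simp
    linear_combination (-2 * (p 0 * u 0 + p 1 * u 1 - 2 * (p 2 * u 2))) * hs
  fin_cases i
  · exact c0
  · exact c1
  · exact c2
  · exact c3
  · exact c4

/-- The Veronese map is an isometric immersion of `S²(√3)` into `S⁴`: at every point `p`
of the sphere of radius `√3` and for all vectors `v, w` tangent to the sphere at `p`
(i.e. orthogonal to `p`), the differential of `ι` preserves inner products. -/
theorem veronese_isometric_immersion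
    (p : EuclideanSpace ℝ (Fin 3)) (hp : ‖p‖ ^ 2 = 3)
    (v w : EuclideanSpace ℝ (Fin 3)) (hv : ⟪v, p⟫ = 0) (hw : ⟪w, p⟫ = 0) :
    ⟪fderiv ℝ veroneseMap p v, fderiv ℝ veroneseMap p w⟫ = ⟪v, w⟫ := by
  rw [(veronese_hasFDerivAt p).fderiv]
  have hp' : ⟪p, p⟫ = 3 := by rw [real_inner_self_eq_norm_sq, hp]
  simp only [PiLp.inner_apply, RCLike.inner_apply, starRingEnd_apply, star_trivial,
    Fin.sum_univ_three, Fin.sum_univ_five] at hp' hv hw ⊢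
  simp only [veroneseDeriv, ContinuousLinearMap.coe_comp', Function.comp_apply,
    ContinuousLinearEquiv.coe_coe, ContinuousLinearMap.pi_apply,
    ContinuousLinearMap.smul_apply, ContinuousLinearMap.add_apply,
    ContinuousLinearMap.sub_apply, ContinuousLinearMap.coe_smul', Pi.smul_apply,
    PiLp.proj_apply, PiLp.continuousLinearEquiv_symm_apply,
    PiLp.toLp_apply, Matrix.cons_val_zero, Matrix.cons_val_one, Matrix.head_cons,
    Matrix.cons_val_two, Matrix.tail_cons, Matrix.cons_val_three, Matrix.cons_val_four,
    smul_eq_mul]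
  have hinv : (Real.sqrt 3)⁻¹ ^ 2 = (3:ℝ)⁻¹ := by
    rw [inv_pow, Real.sq_sqrt]; norm_num
  ring_nf
  simp only [hinv]
  linear_combination ((v 0 * w 0 + v 1 * w 1 + v 2 * w 2) / 3) * hp'
    + ((w 0 * p 0 + w 1 * p 1 + w 2 * p 2) / 9) * hv
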